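/- For the time-reversed planar system (t → -t), the cone Q⁻ = {(x,y) : y² ≥ x²} is forward invariant as long as cos(κt) > 0, and solutions starting in Q⁻ with y0² ≥ 1/(2ε t1) blow up backward in time under the hypothesis cos(κt) - |sin(κt)| > ε on [-t1, 0]. -/

import Mathlib

/-!
Along a solution, `V = y² - x²` satisfies `V' = -2r(1 + r cos κt)` with `r = x² + y²`, so `V`
decreases while `cos κt > 0`; hence a solution lying in the cone `Q⁻` at time `t` lay in it at
every earlier time `s`. Inside `Q⁻` one has `|xy| ≤ y²`, so `W = y²` satisfies
`W' ≤ -2W - 2rW (cos κt - |sin κt|) ≤ -2εW²`. Then `1/W - 2εt` is nondecreasing, and a positive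
solution of `W' ≤ -kW²` on `[a, b]` must have `W b < 1 / (k (b - a))`: the solution starting at
`y₀² ≥ 1/(2εt₁)` cannot survive backward on `[-t₁, 0]`.
-/

open Set

section Monotonicity

variable {D : Set ℝ} {f f' : ℝ → ℝ}

lemma antitoneOn_of_hasDerivAt_nonpos (hD : Convex ℝ D)
    (hf : ∀ t ∈ D, HasDerivAt f (f' t) t) (hf' : ∀ t ∈ D, f' t ≤ 0) : AntitoneOn f D :=
  antitoneOn_of_hasDerivWithinAt_nonpos hD
    (fun t ht => (hf t ht).continuousAt.continuousWithinAt)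
    (fun t ht => (hf t (interior_subset ht)).hasDerivWithinAt)
    (fun t ht => hf' t (interior_subset ht))

lemma monotoneOn_of_hasDerivAt_nonneg (hD : Convex ℝ D)
    (hf : ∀ t ∈ D, HasDerivAt f (f' t) t) (hf' : ∀ t ∈ D, 0 ≤ f' t) : MonotoneOn f D :=
  monotoneOn_of_hasDerivWithinAt_nonneg hD
    (fun t ht => (hf t ht).continuousAt.continuousWithinAt)
    (fun t ht => (hf t (interior_subset ht)).hasDerivWithinAt)
    (fun t ht => hf' t (interior_subset ht))

end Monotonicity

section Riccati

variable {W W' : ℝ → ℝ} {a b k : ℝ}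

lemma inv_add_mul_le_inv_of_hasDerivAt_le_neg_mul_sq (hab : a ≤ b) (hk : 0 ≤ k)
    (hWb : 0 < W b) (hW : ∀ t ∈ Icc a b, HasDerivAt W (W' t) t)
    (hW' : ∀ t ∈ Icc a b, W' t ≤ -k * W t ^ 2) :
    0 < W a ∧ (W a)⁻¹ + k * (b - a) ≤ (W b)⁻¹ := by
  have hanti : AntitoneOn W (Icc a b) :=
    antitoneOn_of_hasDerivAt_nonpos (convex_Icc a b) hW fun t ht =>
      (hW' t ht).trans (by nlinarith [sq_nonneg (W t)])
  have hpos : ∀ t ∈ Icc a b, 0 < W t := fun t ht =>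
    hWb.trans_le (hanti ht ⟨hab, le_rfl⟩ ht.2)
  have hmono : MonotoneOn (fun t => (W t)⁻¹ - k * t) (Icc a b) := by
    refine monotoneOn_of_hasDerivAt_nonneg (convex_Icc a b)
      (fun t ht => ((hW t ht).inv (hpos t ht).ne').sub ((hasDerivAt_id t).const_mul k))
      fun t ht => ?_
    have hW2 : 0 < W t ^ 2 := pow_pos (hpos t ht) 2
    rw [mul_one, sub_nonneg, le_div_iff₀ hW2]
    linarith [hW' t ht]
  have := hmono ⟨le_rfl, hab⟩ ⟨hab, le_rfl⟩ hab
  exact ⟨hpos a ⟨le_rfl, hab⟩, by simp only at this; linarith⟩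

lemma lt_one_div_of_hasDerivAt_le_neg_mul_sq (hab : a < b) (hk : 0 < k)
    (hWb : 0 < W b) (hW : ∀ t ∈ Icc a b, HasDerivAt W (W' t) t)
    (hW' : ∀ t ∈ Icc a b, W' t ≤ -k * W t ^ 2) :
    W b < 1 / (k * (b - a)) := by
  obtain ⟨hWa, hcomp⟩ :=
    inv_add_mul_le_inv_of_hasDerivAt_le_neg_mul_sq hab.le hk.le hWb hW hW'
  rw [lt_one_div hWb (by nlinarith), one_div]
  linarith [inv_pos.mpr hWa]

end Riccati

section PlanarSystem

def IsSolutionOn (κ : ℝ) (x y : ℝ → ℝ) (S : Set ℝ) : Prop :=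
  ∀ t ∈ S,
    HasDerivAt x
      (x t * (1 + Real.cos (κ * t) * ((x t) ^ 2 + (y t) ^ 2)) +
        Real.sin (κ * t) * ((x t) ^ 2 + (y t) ^ 2) * y t) t ∧
    HasDerivAt y
      (-(y t) * (1 + Real.cos (κ * t) * ((x t) ^ 2 + (y t) ^ 2)) +
        Real.sin (κ * t) * ((x t) ^ 2 + (y t) ^ 2) * x t) t

variable {κ : ℝ} {x y : ℝ → ℝ} {S T : Set ℝ}

lemma IsSolutionOn.mono (h : IsSolutionOn κ x y S) (hTS : T ⊆ S) : IsSolutionOn κ x y T :=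
  fun t ht => h t (hTS ht)

lemma IsSolutionOn.hasDerivAt_sq_sub_sq (h : IsSolutionOn κ x y S) {t : ℝ} (ht : t ∈ S) :
    HasDerivAt (fun u => y u ^ 2 - x u ^ 2)
      (-2 * (x t ^ 2 + y t ^ 2) * (1 + Real.cos (κ * t) * (x t ^ 2 + y t ^ 2))) t :=
  (((h t ht).2.pow 2).sub ((h t ht).1.pow 2)).congr_deriv (by push_cast; ring)

lemma IsSolutionOn.hasDerivAt_sq (h : IsSolutionOn κ x y S) {t : ℝ} (ht : t ∈ S) :
    HasDerivAt (fun u => y u ^ 2)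
      (2 * y t * (-(y t) * (1 + Real.cos (κ * t) * ((x t) ^ 2 + (y t) ^ 2)) +
        Real.sin (κ * t) * ((x t) ^ 2 + (y t) ^ 2) * x t)) t :=
  ((h t ht).2.pow 2).congr_deriv (by push_cast; ring)

lemma IsSolutionOn.sq_le_sq_of_cos_pos {s t : ℝ} (h : IsSolutionOn κ x y (Icc s t))
    (hst : s ≤ t) (hcos : ∀ u ∈ Icc s t, 0 < Real.cos (κ * u)) (hcone : x t ^ 2 ≤ y t ^ 2) :
    x s ^ 2 ≤ y s ^ 2 := by
  have hanti : AntitoneOn (fun u => y u ^ 2 - x u ^ 2) (Icc s t) :=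
    antitoneOn_of_hasDerivAt_nonpos (convex_Icc s t) (fun u hu => h.hasDerivAt_sq_sub_sq hu)
      fun u hu => by
        have hr : 0 ≤ x u ^ 2 + y u ^ 2 := by positivity
        nlinarith [mul_nonneg hr (mul_nonneg (hcos u hu).le hr)]
  have := hanti ⟨le_rfl, hst⟩ ⟨hst, le_rfl⟩ hst
  simp only at this
  linarith

end PlanarSystem

lemma two_mul_mul_neg_mul_add_le_of_sq_le_sq {x y c s ε : ℝ} (hcone : x ^ 2 ≤ y ^ 2) (hε : 0 ≤ ε)
    (hcs : ε ≤ c - |s|) :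
    2 * y * (-y * (1 + c * (x ^ 2 + y ^ 2)) + s * (x ^ 2 + y ^ 2) * x) ≤
      -(2 * ε) * (y ^ 2) ^ 2 := by
  have hxy : s * (x * y) ≤ |s| * y ^ 2 := by
    calc s * (x * y) ≤ |s| * (|x| * |y|) := by
          rw [← abs_mul, ← abs_mul]; exact le_abs_self _
      _ ≤ |s| * y ^ 2 := by
          gcongr
          nlinarith [sq_abs x, sq_abs y, abs_nonneg x, abs_nonneg y]
  have hr : 0 ≤ x ^ 2 + y ^ 2 := by positivity
  nlinarith [mul_le_mul_of_nonneg_right hxy hr, mul_nonneg (mul_nonneg (sq_nonneg y) hr)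
    (sub_nonneg.mpr hcs), mul_nonneg (mul_nonneg hε (sq_nonneg y)) (sq_nonneg x)]

/-- Time reversal: the cone Q⁻ = {y² ≥ x²} is backward invariant for the planar
system while cos(κt) > 0 (i.e. forward invariant for the time-reversed system),
and solutions starting in Q⁻ with y₀² ≥ 1/(2 ε t₁) blow up backward in time if
cos(κt) - |sin(κt)| > ε on [-t₁, 0]. -/
theorem stmt_18 (κ ε t1 x0 y0 : ℝ) (ht1 : 0 < t1) (hε : 0 < ε) :
    (∀ x y : ℝ → ℝ,
      (∀ t : ℝ,
        HasDerivAt x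
          (x t * (1 + Real.cos (κ * t) * ((x t) ^ 2 + (y t) ^ 2)) +
            Real.sin (κ * t) * ((x t) ^ 2 + (y t) ^ 2) * y t) t ∧
        HasDerivAt y
          (-(y t) * (1 + Real.cos (κ * t) * ((x t) ^ 2 + (y t) ^ 2)) +
            Real.sin (κ * t) * ((x t) ^ 2 + (y t) ^ 2) * x t) t) →
      ∀ s t : ℝ, s ≤ t → (∀ u ∈ Set.Icc s t, 0 < Real.cos (κ * u)) →
        (y t) ^ 2 ≥ (x t) ^ 2 → (y s) ^ 2 ≥ (x s) ^ 2) ∧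
    ((∀ t ∈ Set.Icc (-t1) (0 : ℝ),
        Real.cos (κ * t) - |Real.sin (κ * t)| > ε) →
      y0 ^ 2 ≥ x0 ^ 2 → y0 ^ 2 ≥ 1 / (2 * ε * t1) →
      ¬ ∃ x y : ℝ → ℝ, x 0 = x0 ∧ y 0 = y0 ∧
        ∀ t ∈ Set.Icc (-t1) (0 : ℝ),
          HasDerivAt x
            (x t * (1 + Real.cos (κ * t) * ((x t) ^ 2 + (y t) ^ 2)) +
              Real.sin (κ * t) * ((x t) ^ 2 + (y t) ^ 2) * y t) t ∧
          HasDerivAt y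
            (-(y t) * (1 + Real.cos (κ * t) * ((x t) ^ 2 + (y t) ^ 2)) +
              Real.sin (κ * t) * ((x t) ^ 2 + (y t) ^ 2) * x t) t) := by
  refine ⟨fun x y hsol s t hst hcos hcone =>
    IsSolutionOn.sq_le_sq_of_cos_pos (fun u _ => hsol u) hst hcos hcone, ?_⟩
  rintro hcs hcone0 hbig ⟨x, y, rfl, rfl, hsol⟩
  have hsol : IsSolutionOn κ x y (Icc (-t1) 0) := hsol
  have hcone : ∀ t ∈ Icc (-t1) 0, x t ^ 2 ≤ y t ^ 2 := fun t ht =>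
    (hsol.mono (Icc_subset_Icc_left ht.1)).sq_le_sq_of_cos_pos ht.2
      (fun u hu => (abs_nonneg _).trans_lt (by linarith [hcs u ⟨ht.1.trans hu.1, hu.2⟩]))
      hcone0
  refine hbig.not_gt ?_
  simpa using lt_one_div_of_hasDerivAt_le_neg_mul_sq (neg_lt_zero.mpr ht1) (by positivity)
    ((one_div_pos.mpr (by positivity)).trans_le hbig) (fun t ht => hsol.hasDerivAt_sq ht)
    fun t ht => two_mul_mul_neg_mul_add_le_of_sq_le_sq (hcone t ht) hε.le (hcs t ht).le
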